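/- arXiv:2601.18041 — 2 statements merged into one kernel-verified Lean document; each statement's English description precedes it below -/
import Mathlib

section
/- Similarity covariance of the difference-differential operator: with Ω a (u,v)-admissible nc set over Gr^{(d;m)}(A) and f nc, for all s₀ ∈ GL_n(R), s₁ ∈ GL_{n'}(R), σ ∈ Ω_n, σ' ∈ Ω_{n'} with s₀·σ ∈ Ω_n, s₁·σ' ∈ Ω_{n'}, and X ∈ M_{n,n'}(A): (Δ̃^{(d;m)}_{u,v} f)(s₀·σ; s₁·σ')(X) = s₀ (Δ̃^{(d;m)}_{u,v} f)(σ;σ')(s₀^{-1} X s₁) s₁^{-1}. -/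
open Matrix

/-- `n × n` matrices over `A`. -/
abbrev Mat (A : Type) (n : ℕ) : Type := Matrix (Fin n) (Fin n) A

/-- `m × m` block matrices with `n × n` blocks over `A`, i.e. `M_m(M_n(A))`. -/
abbrev BMat (A : Type) (m n : ℕ) : Type := Matrix (Fin m) (Fin m) (Mat A n)

section NC

variable {R : Type} [CommRing R] {A : Type} [Ring A]

/-- Membership in the subgroup `H^{(d;m)}_n(A)` of invertible block lower-triangular
matrices `[[X,0],[Y,Z]]` with `X ∈ GL_{m-d}`, `Z ∈ GL_d`. -/
def memH (m d n : ℕ) (hd : d ≤ m) (Γ : BMat A m n) : Prop :=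
  IsUnit Γ ∧
  (∀ i j : Fin m, (i : ℕ) < m - d → m - d ≤ (j : ℕ) → Γ i j = 0) ∧
  IsUnit (Matrix.of fun i j : Fin (m - d) =>
    Γ ⟨(i : ℕ), lt_of_lt_of_le i.isLt (Nat.sub_le m d)⟩
      ⟨(j : ℕ), lt_of_lt_of_le j.isLt (Nat.sub_le m d)⟩) ∧
  IsUnit (Matrix.of fun i j : Fin d =>
    Γ ⟨m - d + (i : ℕ), by have := i.isLt; omega⟩
      ⟨m - d + (j : ℕ), by have := j.isLt; omega⟩)

/-- The relation `X ~ Y` iff `X = Y Γ` for some `Γ ∈ H^{(d;m)}_n(A)`. -/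
def grel (m d n : ℕ) (hd : d ≤ m) (X Y : BMat A m n) : Prop :=
  ∃ Γ : BMat A m n, memH m d n hd Γ ∧ X = Y * Γ

/-- Direct sum of square matrices. -/
def dsumMat {n n' : ℕ} (X : Mat A n) (Y : Mat A n') : Mat A (n + n') :=
  Matrix.reindex finSumFinEquiv finSumFinEquiv (Matrix.fromBlocks X 0 0 Y)

/-- Entrywise block direct sum `X ⊕̃ Y` of elements of `M_m(M_n(A))`, `M_m(M_{n'}(A))`. -/
def dsum {m n n' : ℕ} (X : BMat A m n) (Y : BMat A m n') : BMat A m (n + n') :=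
  Matrix.of fun i j => dsumMat (X i j) (Y i j)

/-- Direct sum of square matrices with entries in a module. -/
def dsumW {W : Type} [AddCommMonoid W] {n n' : ℕ}
    (X : Matrix (Fin n) (Fin n) W) (Y : Matrix (Fin n') (Fin n') W) :
    Matrix (Fin (n + n')) (Fin (n + n')) W :=
  Matrix.reindex finSumFinEquiv finSumFinEquiv (Matrix.fromBlocks X 0 0 Y)

/-- Block upper triangular matrix `[[P, H],[0, Q]]`. -/
def triW {W : Type} [AddCommMonoid W] {n n' : ℕ}
    (P : Matrix (Fin n) (Fin n) W) (H : Matrix (Fin n) (Fin n') W)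
    (Q : Matrix (Fin n') (Fin n') W) :
    Matrix (Fin (n + n')) (Fin (n + n')) W :=
  Matrix.reindex finSumFinEquiv finSumFinEquiv (Matrix.fromBlocks P H 0 Q)

/-- The unipotent upper triangular matrix `[[I, T],[0, I]]` over `R`. -/
def uptri (R : Type) [CommRing R] {p q : ℕ} (T : Matrix (Fin p) (Fin q) R) :
    Matrix (Fin (p + q)) (Fin (p + q)) R :=
  Matrix.reindex finSumFinEquiv finSumFinEquiv (Matrix.fromBlocks 1 T 0 1)

/-- Left multiplication of a representative by `s^{⊕ m}` for a scalar matrix `s` over `R`: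
the similarity action on the nc Grassmannian. -/
def simAct [Algebra R A] {m N : ℕ} (s : Matrix (Fin N) (Fin N) R) (X : BMat A m N) :
    BMat A m N :=
  Matrix.of fun i j => s.map (algebraMap R A) * X i j

/-- Multiplication of a matrix over an `R`-module `W` by a matrix over `R` on the left. -/
def rmulL {W : Type} [AddCommMonoid W] [Module R W] {p q r : ℕ}
    (s : Matrix (Fin p) (Fin q) R) (X : Matrix (Fin q) (Fin r) W) :
    Matrix (Fin p) (Fin r) W :=
  Matrix.of fun i j => ∑ k, s i k • X k j

/-- Multiplication of a matrix over an `R`-module `W` by a matrix over `R` on the right. -/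
def rmulR {W : Type} [AddCommMonoid W] [Module R W] {p q r : ℕ}
    (X : Matrix (Fin p) (Fin q) W) (s : Matrix (Fin q) (Fin r) R) :
    Matrix (Fin p) (Fin r) W :=
  Matrix.of fun i j => ∑ k, s k j • X i k

/-- Vertical concatenation of matrices. -/
def vcat {α : Type} {p p' q : ℕ} (X : Matrix (Fin p) (Fin q) α)
    (Y : Matrix (Fin p') (Fin q) α) : Matrix (Fin (p + p')) (Fin q) α :=
  Matrix.of fun i j =>
    if h : (i : ℕ) < p then X ⟨(i : ℕ), h⟩ j
    else Y ⟨(i : ℕ) - p, by have := i.isLt; omega⟩ j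

/-- The affine embedding `X ↦ [[0, I],[I, X]]` in the case `(d;m) = (1;2)`. -/
def affEmb {n : ℕ} (X : Mat A n) : BMat A 2 n := !![0, 1; 1, X]

/-- The matrix `[[0, X],[0, 0]] ∈ M_{n+n'}(A)` with `X ∈ M_{n,n'}(A)` in the upper right
corner. -/
def cornerMat {n n' : ℕ} (X : Matrix (Fin n) (Fin n') A) : Mat A (n + n') :=
  Matrix.reindex finSumFinEquiv finSumFinEquiv (Matrix.fromBlocks 0 X 0 0)

/-- The representative `(P;Q)_{u,v}(X)` of the element `(σ;σ')_{u,v}(X)`: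
`P ⊕̃ Q + Σ_{j=1}^d [[0, X Q_{v, m-d+j}],[0,0]] ⊗ e^{(m)}_{d+u, m-d+j}`. -/
def ins {m d n n' : ℕ} (hd : d ≤ m) (u : Fin (m - d)) (v : Fin d)
    (P : BMat A m n) (Q : BMat A m n') (X : Matrix (Fin n) (Fin n') A) :
    BMat A m (n + n') :=
  dsum P Q + Matrix.of fun (i j : Fin m) =>
    if (i : ℕ) = d + (u : ℕ) ∧ m - d ≤ (j : ℕ) then
      cornerMat (X * Q ⟨(v : ℕ), lt_of_lt_of_le v.isLt hd⟩ j)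
    else 0

/-- The matrix unit `e^{(md,d)}_{u,v} ⊗ X`. -/
def eMat {md d : ℕ} {n : ℕ} (u : Fin md) (v : Fin d) (X : Mat A n) :
    Matrix (Fin md) (Fin d) (Mat A n) :=
  Matrix.of fun i j => if i = u ∧ j = v then X else 0

/-- The block matrix `[[I_d ⊗ I_n, 0],[-Y, I_{m-d} ⊗ I_n]]` used to define `σ(Y)`. -/
def shiftMat {m d n : ℕ} (hd : d ≤ m) (Y : Matrix (Fin (m - d)) (Fin d) (Mat A n)) :
    BMat A m n :=
  Matrix.of fun i j =>
    (if i = j then (1 : Mat A n) else 0) +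
    (if h : d ≤ (i : ℕ) ∧ (j : ℕ) < d then
      -Y ⟨(i : ℕ) - d, by have := i.isLt; omega⟩ ⟨(j : ℕ), h.2⟩
    else 0)

/-- A family `C` of sets of representatives is an nc set over `Gr^{(d;m)}(A)`:
it consists of invertible matrices, is saturated under the relation `~`
(i.e. it is a set of equivalence classes), and is closed under direct sums. -/
def IsNCSetCarrier {m d : ℕ} (hd : d ≤ m) (C : ∀ n, Set (BMat A m n)) : Prop :=
  (∀ n, ∀ a ∈ C n, IsUnit a) ∧
  (∀ n, ∀ a b : BMat A m n, grel m d n hd a b → (a ∈ C n ↔ b ∈ C n)) ∧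
  (∀ n n', ∀ a ∈ C n, ∀ b ∈ C n', dsum a b ∈ C (n + n'))

/-- `f` is an nc function on the nc set (with carrier) `C` over `Gr^{(d;m)}(A)`:
it descends to equivalence classes, preserves direct sums, and is similarity preserving. -/
def IsNCFun (R : Type) [CommRing R] [Algebra R A] {W : Type} [AddCommMonoid W] [Module R W]
    {m d : ℕ} (hd : d ≤ m) (C : ∀ n, Set (BMat A m n))
    (f : ∀ n, BMat A m n → Matrix (Fin n) (Fin n) W) : Prop :=
  (∀ n, ∀ a ∈ C n, ∀ b ∈ C n, grel m d n hd a b → f n a = f n b) ∧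
  (∀ n n', ∀ a ∈ C n, ∀ b ∈ C n', f (n + n') (dsum a b) = dsumW (f n a) (f n' b)) ∧
  (∀ n (s : (Matrix (Fin n) (Fin n) R)ˣ), ∀ a ∈ C n,
    simAct (s : Matrix (Fin n) (Fin n) R) a ∈ C n →
    f n (simAct (s : Matrix (Fin n) (Fin n) R) a) =
      rmulR (rmulL (s : Matrix (Fin n) (Fin n) R) (f n a))
        ((s⁻¹ : (Matrix (Fin n) (Fin n) R)ˣ) : Matrix (Fin n) (Fin n) R))

/-- `(u,v)`-admissibility of an nc set. -/
def Admissible (R : Type) [CommRing R] [Algebra R A] {m d : ℕ} (hd : d ≤ m)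
    (C : ∀ n, Set (BMat A m n)) (u : Fin (m - d)) (v : Fin d) : Prop :=
  ∀ n n' (a : BMat A m n) (b : BMat A m n') (X : Matrix (Fin n) (Fin n') A),
    a ∈ C n → b ∈ C n' →
    ∃ r : Rˣ, ins hd u v a b ((r : R) • X) ∈ C (n + n')

/-- The similarity-invariant envelope of an nc set. -/
def envC (R : Type) [CommRing R] [Algebra R A] {m d : ℕ} (hd : d ≤ m)
    (C : ∀ n, Set (BMat A m n)) : ∀ n, Set (BMat A m n) :=
  fun n => {x | ∃ (s : (Matrix (Fin n) (Fin n) R)ˣ) (a : BMat A m n),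
    a ∈ C n ∧ grel m d n hd x (simAct (s : Matrix (Fin n) (Fin n) R) a)}

end NC

section Res

variable {R : Type} [CommRing R] {A : Type} [Ring A] [Algebra R A]

/-- Entrywise inclusion `M_m(M_n(B)) → M_m(M_n(A))` for a subalgebra `B ⊆ A`. -/
def bmap (D : Subalgebra R A) {m n : ℕ} (b : BMat (↥D) m n) : BMat A m n :=
  Matrix.of fun i j => (b i j).map (fun x => (x : A))

/-- Entrywise inclusion for rectangular matrices over a subalgebra. -/
def rcmap (D : Subalgebra R A) {n n' : ℕ} (X : Matrix (Fin n) (Fin n') ↥D) :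
    Matrix (Fin n) (Fin n') A :=
  X.map (fun x => (x : A))

/-- `X` is invertible in `M_m(M_n(B))` for the subalgebra `B = D ⊆ A`. -/
def invIn (D : Subalgebra R A) {m n : ℕ} (X : BMat A m n) : Prop :=
  (∀ i j k l, X i j k l ∈ D) ∧
  ∃ Y : BMat A m n, (∀ i j k l, Y i j k l ∈ D) ∧ X * Y = 1 ∧ Y * X = 1

/-- The amplification `a^{⊕̃ n}` of an element `a ∈ M_m(A) = M_m(M_1(A))`. -/
def ampl {m : ℕ} (a : BMat A m 1) (n : ℕ) : BMat A m n :=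
  Matrix.of fun i j => Matrix.diagonal (fun _ => a i j 0 0)

/-- The matrix `r^{(d;m)}(P;Q)`: first `m-d` block columns are the last `m-d` block
columns of `P`, last `d` block columns are the last `d` block columns of `Q`. -/
def rmat {m d n : ℕ} (hd : d ≤ m) (P Q : BMat A m n) : BMat A m n :=
  Matrix.of fun i j =>
    if h : (j : ℕ) < m - d then P i ⟨d + (j : ℕ), by omega⟩ else Q i j

/-- The value `[B_{v,m-d+1},…,B_{v,m}] ⋅ ζ_u` of the `(d;m)`-Grassmannian resolvent,
where `ζ_u` is the `u`-th bottom block column of the inverse `Rinv` of an `r`-matrix. -/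
def resVal {m d n : ℕ} (hd : d ≤ m) (v : Fin d) (u : Fin (m - d))
    (Bm Rinv : BMat A m n) : Mat A n :=
  ∑ j : Fin d,
    Bm ⟨(v : ℕ), lt_of_lt_of_le v.isLt hd⟩ ⟨m - d + (j : ℕ), by have := j.isLt; omega⟩ *
    Rinv ⟨m - d + (j : ℕ), by have := j.isLt; omega⟩ ⟨d + (u : ℕ), by have := u.isLt; omega⟩

/-- Membership in the `(d;m)`-Grassmannian `B`-resolvent set of `π` (represented by `p`):
`b` represents an element of `Gr^{(d;m)}_n(B)` such that `π^{⊕n}` and `b` are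
transversal in `A`. -/
def ResMem {m d : ℕ} (hd : d ≤ m) (p : BMat A m 1) (D : Subalgebra R A) {n : ℕ}
    (b : BMat (↥D) m n) : Prop :=
  IsUnit b ∧ IsUnit (rmat hd (ampl p n) (bmap D b))

end Res


section Helpers

variable {A : Type} [Ring A]

/-- `[[1,G],[0,1]]` over `A`. -/
def utriA {p q : ℕ} (G : Matrix (Fin p) (Fin q) A) : Mat A (p + q) :=
  Matrix.reindex finSumFinEquiv finSumFinEquiv (Matrix.fromBlocks 1 G 0 1)

lemma dsumMat_mul {n n' : ℕ} (X X' : Mat A n) (Y Y' : Mat A n') :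
    dsumMat X Y * dsumMat X' Y' = dsumMat (X * X') (Y * Y') := by
  unfold dsumMat
  rw [Matrix.reindex_apply, Matrix.reindex_apply, Matrix.reindex_apply,
    Matrix.submatrix_mul_equiv, Matrix.fromBlocks_multiply]
  simp

lemma dsumMat_mul_corner {n n' : ℕ} (X : Mat A n) (Y : Mat A n')
    (G : Matrix (Fin n) (Fin n') A) :
    dsumMat X Y * cornerMat G = cornerMat (X * G) := by
  unfold dsumMat cornerMat
  rw [Matrix.reindex_apply, Matrix.reindex_apply, Matrix.reindex_apply,
    Matrix.submatrix_mul_equiv, Matrix.fromBlocks_multiply]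
  simp

lemma corner_mul_dsumMat {n n' : ℕ} (X : Mat A n) (Y : Mat A n')
    (G : Matrix (Fin n) (Fin n') A) :
    cornerMat G * dsumMat X Y = cornerMat (G * Y) := by
  unfold dsumMat cornerMat
  rw [Matrix.reindex_apply, Matrix.reindex_apply, Matrix.reindex_apply,
    Matrix.submatrix_mul_equiv, Matrix.fromBlocks_multiply]
  simp

lemma utriA_mul {p q : ℕ} (G G' : Matrix (Fin p) (Fin q) A) :
    utriA G * utriA G' = utriA (G + G') := by
  unfold utriA
  rw [Matrix.reindex_apply, Matrix.reindex_apply, Matrix.reindex_apply,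
    Matrix.submatrix_mul_equiv, Matrix.fromBlocks_multiply]
  simp [add_comm]

lemma utriA_zero {p q : ℕ} : utriA (0 : Matrix (Fin p) (Fin q) A) = 1 := by
  unfold utriA
  rw [Matrix.reindex_apply]
  rw [Matrix.fromBlocks_one]
  exact Matrix.submatrix_one_equiv _

lemma utriA_mul_dsum_eq {p : ℕ} (G C X Y : Mat A p)
    (h : G * Y = X * C) :
    utriA G * dsumMat X Y = dsumMat X Y * utriA C := by
  unfold utriA dsumMat
  simp only [Matrix.reindex_apply, Matrix.submatrix_mul_equiv, Matrix.fromBlocks_multiply]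
  simp [h]

end Helpers


section Helpers2

variable {R : Type} [CommRing R] {A : Type} [Ring A] [Algebra R A]
variable {W : Type} [AddCommMonoid W] [Module R W]

lemma smul_dsumMat (c : R) {n n' : ℕ} (X : Mat A n) (Y : Mat A n') :
    dsumMat (c • X) (c • Y) = c • dsumMat X Y := by
  ext i j
  unfold dsumMat
  simp only [Matrix.reindex_apply, Matrix.submatrix_apply, Matrix.smul_apply]
  rcases (finSumFinEquiv.symm i) with x | x <;> rcases (finSumFinEquiv.symm j) with y | y <;>
    simp [Matrix.fromBlocks]

lemma smul_cornerMat (c : R) {n n' : ℕ} (G : Matrix (Fin n) (Fin n') A) :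
    cornerMat (c • G) = c • cornerMat G := by
  ext i j
  unfold cornerMat
  simp only [Matrix.reindex_apply, Matrix.submatrix_apply, Matrix.smul_apply]
  rcases (finSumFinEquiv.symm i) with x | x <;> rcases (finSumFinEquiv.symm j) with y | y <;>
    simp [Matrix.fromBlocks]

lemma map_dsumMat {n n' : ℕ} (X : Mat R n) (Y : Mat R n') :
    (dsumMat X Y).map (algebraMap R A) =
      dsumMat (X.map (algebraMap R A)) (Y.map (algebraMap R A)) := by
  ext i j
  unfold dsumMat
  simp only [Matrix.reindex_apply, Matrix.submatrix_apply, Matrix.map_apply]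
  rcases (finSumFinEquiv.symm i) with x | x <;> rcases (finSumFinEquiv.symm j) with y | y <;>
    simp [Matrix.fromBlocks]

lemma map_smul_mat {p q : ℕ} (c : R) (M : Matrix (Fin p) (Fin q) R) :
    ((c • M).map (algebraMap R A)) = c • (M.map (algebraMap R A)) := by
  ext i j
  simp [Algebra.smul_def, _root_.map_mul]

lemma uptri_map {p q : ℕ} (T : Matrix (Fin p) (Fin q) R) :
    (uptri R T).map (algebraMap R A) = utriA (T.map (algebraMap R A)) := by
  ext i j
  unfold uptri utriA
  simp only [Matrix.reindex_apply, Matrix.submatrix_apply, Matrix.map_apply]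
  rcases (finSumFinEquiv.symm i) with x | x <;> rcases (finSumFinEquiv.symm j) with y | y <;>
    simp [Matrix.fromBlocks, Matrix.one_apply, apply_ite (algebraMap R A)]

lemma rmulL_eq_map_mul {p q r : ℕ} (s : Matrix (Fin p) (Fin q) R)
    (M : Matrix (Fin q) (Fin r) A) :
    rmulL s M = s.map (algebraMap R A) * M := by
  ext i j
  simp [rmulL, Matrix.mul_apply, Algebra.smul_def]

lemma rmulR_eq_mul_map {p q r : ℕ} (M : Matrix (Fin p) (Fin q) A)
    (s : Matrix (Fin q) (Fin r) R) :
    rmulR M s = M * s.map (algebraMap R A) := by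
  ext i j
  simp only [rmulR, Matrix.of_apply, Matrix.mul_apply, Matrix.map_apply]
  exact Finset.sum_congr rfl fun k _ => by rw [Algebra.smul_def, Algebra.commutes]

-- rmul algebra over W
lemma rmulR_rmulR {p q r t : ℕ} (M : Matrix (Fin p) (Fin q) W)
    (s : Matrix (Fin q) (Fin r) R) (s' : Matrix (Fin r) (Fin t) R) :
    rmulR (rmulR M s) s' = rmulR M (s * s') := by
  ext i j
  simp only [rmulR, Matrix.of_apply, Finset.smul_sum, Matrix.mul_apply, Finset.sum_smul]
  rw [Finset.sum_comm]
  refine Finset.sum_congr rfl fun k _ => Finset.sum_congr rfl fun l _ => ?_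
  rw [smul_smul, mul_comm]

lemma rmulR_one {p q : ℕ} (M : Matrix (Fin p) (Fin q) W) :
    rmulR M (1 : Matrix (Fin q) (Fin q) R) = M := by
  ext i j
  simp [rmulR, Matrix.one_apply, ite_smul, Finset.sum_ite_eq]

lemma rmulL_smul_left {p q r : ℕ} (c : R) (s : Matrix (Fin p) (Fin q) R)
    (M : Matrix (Fin q) (Fin r) W) :
    rmulL (c • s) M = c • rmulL s M := by
  ext i j
  simp [rmulL, Finset.smul_sum, smul_smul]

lemma rmulL_smul_right {p q r : ℕ} (c : R) (s : Matrix (Fin p) (Fin q) R)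
    (M : Matrix (Fin q) (Fin r) W) :
    rmulL s (c • M) = c • rmulL s M := by
  ext i j
  simp [rmulL, Finset.smul_sum, smul_smul, mul_comm]

lemma rmulR_smul_left {p q r : ℕ} (c : R) (M : Matrix (Fin p) (Fin q) W)
    (s : Matrix (Fin q) (Fin r) R) :
    rmulR (c • M) s = c • rmulR M s := by
  ext i j
  simp [rmulR, Finset.smul_sum, smul_smul, mul_comm]

lemma rmulR_smul_right {p q r : ℕ} (c : R) (M : Matrix (Fin p) (Fin q) W)
    (s : Matrix (Fin q) (Fin r) R) :
    rmulR M (c • s) = c • rmulR M s := by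
  ext i j
  simp [rmulR, Finset.smul_sum, smul_smul]

lemma extract1 {p : ℕ} (T : Matrix (Fin p) (Fin p) R)
    (F₁ F₂ : Matrix (Fin p) (Fin p) W)
    (h : rmulL (uptri R T) (dsumW F₁ F₂) = rmulR (dsumW F₁ F₂) (uptri R T)) :
    rmulL T F₂ = rmulR F₁ T := by
  ext x y
  have h2 : ∀ i j, rmulL (uptri R T) (dsumW F₁ F₂) i j
      = rmulR (dsumW F₁ F₂) (uptri R T) i j := fun i j => congrFun (congrFun h i) j
  have h3 := h2 (finSumFinEquiv (Sum.inl x)) (finSumFinEquiv (Sum.inr y))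
  simp only [rmulL, rmulR, Matrix.of_apply] at h3 ⊢
  rw [← Equiv.sum_comp finSumFinEquiv, Fintype.sum_sum_type] at h3
  conv at h3 => rw [← Equiv.sum_comp finSumFinEquiv, Fintype.sum_sum_type]
  simp only [uptri, dsumW, Matrix.reindex_apply, Matrix.submatrix_apply,
    Equiv.symm_apply_apply, Matrix.fromBlocks_apply₁₁, Matrix.fromBlocks_apply₁₂,
    Matrix.fromBlocks_apply₂₁, Matrix.fromBlocks_apply₂₂, Matrix.zero_apply,
    smul_zero, zero_smul, Finset.sum_const_zero, add_zero, zero_add] at h3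
  exact h3

lemma extract2 {n n' : ℕ} (t₀ : Matrix (Fin n) (Fin n) R) (t₁ : Matrix (Fin n') (Fin n') R)
    (G₁ : Matrix (Fin n) (Fin n) W) (Hm : Matrix (Fin n) (Fin n') W)
    (G₂ : Matrix (Fin n') (Fin n') W)
    (G₁' : Matrix (Fin n) (Fin n) W) (Hm' : Matrix (Fin n) (Fin n') W)
    (G₂' : Matrix (Fin n') (Fin n') W)
    (h : rmulL (dsumMat t₀ t₁) (triW G₁' Hm' G₂') = rmulR (triW G₁ Hm G₂) (dsumMat t₀ t₁)) :
    rmulL t₀ Hm' = rmulR Hm t₁ := by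
  ext x y
  have h2 : ∀ i j, rmulL (dsumMat t₀ t₁) (triW G₁' Hm' G₂') i j
      = rmulR (triW G₁ Hm G₂) (dsumMat t₀ t₁) i j := fun i j => congrFun (congrFun h i) j
  have h3 := h2 (finSumFinEquiv (Sum.inl x)) (finSumFinEquiv (Sum.inr y))
  simp only [rmulL, rmulR, Matrix.of_apply] at h3 ⊢
  rw [← Equiv.sum_comp finSumFinEquiv, Fintype.sum_sum_type] at h3
  conv at h3 => rw [← Equiv.sum_comp finSumFinEquiv, Fintype.sum_sum_type]
  simp only [dsumMat, triW, Matrix.reindex_apply, Matrix.submatrix_apply,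
    Equiv.symm_apply_apply, Matrix.fromBlocks_apply₁₁, Matrix.fromBlocks_apply₁₂,
    Matrix.fromBlocks_apply₂₁, Matrix.fromBlocks_apply₂₂, Matrix.zero_apply,
    smul_zero, zero_smul, Finset.sum_const_zero, add_zero, zero_add] at h3
  exact h3

lemma isUnit_diagonal_const {p q : ℕ} (K K' : Mat A q)
    (h1 : K * K' = 1) (h2 : K' * K = 1) :
    IsUnit (Matrix.diagonal (fun _ : Fin p => K)) := by
  refine ⟨⟨Matrix.diagonal (fun _ => K), Matrix.diagonal (fun _ => K'), ?_, ?_⟩, rfl⟩ <;>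
    rw [Matrix.diagonal_mul_diagonal] <;> simp [h1, h2]

end Helpers2


/-- similarity covariance of the nc difference-differential operator. -/
theorem diff_value_similarity {R : Type} [CommRing R] {A : Type} [Ring A] [Algebra R A]
    {W : Type} [AddCommMonoid W] [Module R W]
    (m d : ℕ) (hd1 : 1 ≤ d) (hd : d ≤ m)
    (C : ∀ n, Set (BMat A m n)) (hC : IsNCSetCarrier hd C)
    (u : Fin (m - d)) (v : Fin d)
    (hadm : Admissible R hd C u v)
    (f : ∀ n, BMat A m n → Matrix (Fin n) (Fin n) W) (hf : IsNCFun R hd C f)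
    {n n' : ℕ} (s₀ : (Matrix (Fin n) (Fin n) R)ˣ) (s₁ : (Matrix (Fin n') (Fin n') R)ˣ)
    (a : BMat A m n) (ha : a ∈ C n) (b : BMat A m n') (hb : b ∈ C n')
    (hsa : simAct (s₀ : Matrix (Fin n) (Fin n) R) a ∈ C n)
    (hsb : simAct (s₁ : Matrix (Fin n') (Fin n') R) b ∈ C n')
    (X : Matrix (Fin n) (Fin n') A) (r r' : Rˣ)
    (hm : ins hd u v (simAct (s₀ : Matrix (Fin n) (Fin n) R) a)
        (simAct (s₁ : Matrix (Fin n') (Fin n') R) b) ((r : R) • X) ∈ C (n + n'))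
    (hm' : ins hd u v a b ((r' : R) •
        rmulR (rmulL ((s₀⁻¹ : (Matrix (Fin n) (Fin n) R)ˣ) : Matrix (Fin n) (Fin n) R) X)
          (s₁ : Matrix (Fin n') (Fin n') R)) ∈ C (n + n'))
    (H H' : Matrix (Fin n) (Fin n') W)
    (hH : f (n + n') (ins hd u v (simAct (s₀ : Matrix (Fin n) (Fin n) R) a)
        (simAct (s₁ : Matrix (Fin n') (Fin n') R) b) ((r : R) • X)) =
      triW (f n (simAct (s₀ : Matrix (Fin n) (Fin n) R) a)) H
        (f n' (simAct (s₁ : Matrix (Fin n') (Fin n') R) b)))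
    (hH' : f (n + n') (ins hd u v a b ((r' : R) •
        rmulR (rmulL ((s₀⁻¹ : (Matrix (Fin n) (Fin n) R)ˣ) : Matrix (Fin n) (Fin n) R) X)
          (s₁ : Matrix (Fin n') (Fin n') R))) = triW (f n a) H' (f n' b)) :
    ((r⁻¹ : Rˣ) : R) • H =
      rmulR (rmulL (s₀ : Matrix (Fin n) (Fin n) R) (((r'⁻¹ : Rˣ) : R) • H'))
        ((s₁⁻¹ : (Matrix (Fin n') (Fin n') R)ˣ) : Matrix (Fin n') (Fin n') R) := by
  obtain ⟨hC1, hC2, hC3⟩ := hC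
  obtain ⟨hf1, hf2, hf3⟩ := hf
  set s₀v : Matrix (Fin n) (Fin n) R := (s₀ : Matrix (Fin n) (Fin n) R) with hs₀v
  set s₁v : Matrix (Fin n') (Fin n') R := (s₁ : Matrix (Fin n') (Fin n') R) with hs₁v
  set s₀iv : Matrix (Fin n) (Fin n) R :=
    ((s₀⁻¹ : (Matrix (Fin n) (Fin n) R)ˣ) : Matrix (Fin n) (Fin n) R) with hs₀iv
  set s₁iv : Matrix (Fin n') (Fin n') R :=
    ((s₁⁻¹ : (Matrix (Fin n') (Fin n') R)ˣ) : Matrix (Fin n') (Fin n') R) with hs₁iv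
  set φ := algebraMap R A with hφ
  set P := ins hd u v (simAct s₀v a) (simAct s₁v b) ((r : R) • X) with hPdef
  set Q := ins hd u v a b ((r' : R) • rmulR (rmulL s₀iv X) s₁v) with hQdef
  set T : Matrix (Fin (n + n')) (Fin (n + n')) R :=
    dsumMat ((r : R) • s₀v) ((r' : R) • s₁v) with hTdef
  set Cm : Mat A (n + n') :=
    dsumMat ((r : R) • (1 : Mat A n)) ((r' : R) • (1 : Mat A n')) with hCmdef
  have hs : s₀v.map φ * s₀iv.map φ = 1 := by
    rw [← Matrix.map_mul, hs₀v, hs₀iv, Units.mul_inv,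
      Matrix.map_one _ (map_zero φ) (map_one φ)]
  have hTmap : T.map φ = dsumMat ((r : R) • s₀v.map φ) ((r' : R) • s₁v.map φ) := by
    rw [hTdef, map_dsumMat, map_smul_mat, map_smul_mat]
  -- key pointwise identity
  have key : ∀ i j : Fin m, (T.map φ) * Q i j = P i j * Cm := by
    intro i j
    have hQij : Q i j = dsumMat (a i j) (b i j) +
        (if (i : ℕ) = d + (u : ℕ) ∧ m - d ≤ (j : ℕ) then
          cornerMat (((r' : R) • rmulR (rmulL s₀iv X) s₁v) *
            b ⟨(v : ℕ), lt_of_lt_of_le v.isLt hd⟩ j) else 0) := rfl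
    have hPij : P i j = dsumMat (s₀v.map φ * a i j) (s₁v.map φ * b i j) +
        (if (i : ℕ) = d + (u : ℕ) ∧ m - d ≤ (j : ℕ) then
          cornerMat (((r : R) • X) *
            (s₁v.map φ * b ⟨(v : ℕ), lt_of_lt_of_le v.isLt hd⟩ j)) else 0) := rfl
    rw [hQij, hPij, hTmap, mul_add, add_mul]
    congr 1
    · rw [hCmdef, dsumMat_mul, dsumMat_mul, Matrix.smul_mul, Matrix.smul_mul,
        Matrix.mul_smul, Matrix.mul_smul, Matrix.mul_one, Matrix.mul_one]
    · by_cases hcond : (i : ℕ) = d + (u : ℕ) ∧ m - d ≤ (j : ℕ)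
      · rw [if_pos hcond, if_pos hcond, hCmdef, dsumMat_mul_corner, corner_mul_dsumMat]
        have hY : rmulR (rmulL s₀iv X) s₁v = s₀iv.map φ * X * s₁v.map φ := by
          rw [rmulR_eq_mul_map, rmulL_eq_map_mul]
        rw [hY]
        simp only [Matrix.smul_mul, Matrix.mul_smul, Matrix.mul_one]
        simp only [← Matrix.mul_assoc, hs, Matrix.one_mul]
      · rw [if_neg hcond, if_neg hcond, Matrix.mul_zero, Matrix.zero_mul]
  -- the H-matrix Γ
  have hKK' : utriA Cm * utriA (-Cm) = 1 := by rw [utriA_mul, add_neg_cancel, utriA_zero]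
  have hK'K : utriA (-Cm) * utriA Cm = 1 := by rw [utriA_mul, neg_add_cancel, utriA_zero]
  have hΓ : memH m d ((n + n') + (n + n')) hd
      (Matrix.diagonal (fun _ : Fin m => utriA Cm)) := by
    refine ⟨isUnit_diagonal_const _ _ hKK' hK'K, ?_, ?_, ?_⟩
    · intro i j h1 h2
      exact Matrix.diagonal_apply_ne _ (Fin.ne_of_val_ne (by omega))
    · have heq : (Matrix.of fun i j : Fin (m - d) =>
          Matrix.diagonal (fun _ : Fin m => utriA Cm)
            ⟨(i : ℕ), lt_of_lt_of_le i.isLt (Nat.sub_le m d)⟩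
            ⟨(j : ℕ), lt_of_lt_of_le j.isLt (Nat.sub_le m d)⟩)
          = Matrix.diagonal (fun _ : Fin (m - d) => utriA Cm) := by
        ext i j
        simp [Matrix.diagonal_apply, Fin.ext_iff]
      rw [heq]
      exact isUnit_diagonal_const _ _ hKK' hK'K
    · have heq : (Matrix.of fun i j : Fin d =>
          Matrix.diagonal (fun _ : Fin m => utriA Cm)
            ⟨m - d + (i : ℕ), by have := i.isLt; omega⟩
            ⟨m - d + (j : ℕ), by have := j.isLt; omega⟩)
          = Matrix.diagonal (fun _ : Fin d => utriA Cm) := by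
        ext i j
        simp [Matrix.diagonal_apply, Fin.ext_iff]
      rw [heq]
      exact isUnit_diagonal_const _ _ hKK' hK'K
  -- the grel relation
  have hgrel : grel m d ((n + n') + (n + n')) hd
      (simAct (uptri R T) (dsum P Q)) (dsum P Q) := by
    refine ⟨Matrix.diagonal (fun _ : Fin m => utriA Cm), hΓ, ?_⟩
    refine Matrix.ext fun i j => ?_
    rw [Matrix.mul_diagonal]
    show (uptri R T).map φ * dsumMat (P i j) (Q i j) = dsumMat (P i j) (Q i j) * utriA Cm
    rw [uptri_map]
    exact utriA_mul_dsum_eq _ _ _ _ (key i j)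
  -- memberships
  have hZ : dsum P Q ∈ C ((n + n') + (n + n')) := hC3 _ _ _ hm _ hm'
  have hsZ : simAct (uptri R T) (dsum P Q) ∈ C ((n + n') + (n + n')) :=
    (hC2 _ _ _ hgrel).mpr hZ
  -- the unit
  have hTu1 : uptri R T * uptri R (-T) = 1 := by
    show utriA (A := R) T * utriA (-T) = 1
    rw [utriA_mul, add_neg_cancel, utriA_zero]
  have hTu2 : uptri R (-T) * uptri R T = 1 := by
    show utriA (A := R) (-T) * utriA T = 1
    rw [utriA_mul, neg_add_cancel, utriA_zero]
  set TU : (Matrix (Fin ((n + n') + (n + n'))) (Fin ((n + n') + (n + n'))) R)ˣ :=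
    ⟨uptri R T, uptri R (-T), hTu1, hTu2⟩ with hTU
  -- f equations
  have e1 : f _ (simAct (uptri R T) (dsum P Q)) = f _ (dsum P Q) :=
    hf1 _ _ hsZ _ hZ hgrel
  have e2 : f _ (simAct (uptri R T) (dsum P Q)) =
      rmulR (rmulL (uptri R T) (f _ (dsum P Q))) (uptri R (-T)) :=
    hf3 _ TU _ hZ hsZ
  have hfZ : f ((n + n') + (n + n')) (dsum P Q) =
      dsumW (triW (f n (simAct s₀v a)) H (f n' (simAct s₁v b)))
        (triW (f n a) H' (f n' b)) := by
    rw [hf2 _ _ _ hm _ hm', hH, hH']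
  have e3 : rmulR (f _ (dsum P Q)) (uptri R T) = rmulL (uptri R T) (f _ (dsum P Q)) := by
    conv_lhs => rw [e1.symm.trans e2]
    rw [rmulR_rmulR, hTu2, rmulR_one]
  have e4 : rmulL T (triW (f n a) H' (f n' b)) =
      rmulR (triW (f n (simAct s₀v a)) H (f n' (simAct s₁v b))) T := by
    apply extract1
    rw [← hfZ]
    exact e3.symm
  have e5 : rmulL ((r : R) • s₀v) H' = rmulR H ((r' : R) • s₁v) :=
    extract2 _ _ (f n (simAct s₀v a)) H (f n' (simAct s₁v b)) (f n a) H' (f n' b) e4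
  have e6 : (r : R) • rmulL s₀v H' = (r' : R) • rmulR H s₁v := by
    rw [← rmulL_smul_left, ← rmulR_smul_right]
    exact e5
  have e7 : (r : R) • rmulR (rmulL s₀v H') s₁iv = (r' : R) • H := by
    have h8 := congrArg (fun M => rmulR M s₁iv) e6
    simp only [rmulR_smul_left, rmulR_rmulR] at h8
    rw [hs₁v, hs₁iv, Units.mul_inv, rmulR_one] at h8
    exact h8
  have e8 := congrArg (fun M => (((r⁻¹ : Rˣ) : R) * ((r'⁻¹ : Rˣ) : R)) • M) e7
  simp only [smul_smul] at e8
  have c1 : ((r⁻¹ : Rˣ) : R) * ((r'⁻¹ : Rˣ) : R) * (r : R) = ((r'⁻¹ : Rˣ) : R) := by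
    rw [mul_comm ((r⁻¹ : Rˣ) : R) ((r'⁻¹ : Rˣ) : R), mul_assoc, Units.inv_mul, mul_one]
  have c2 : ((r⁻¹ : Rˣ) : R) * ((r'⁻¹ : Rˣ) : R) * (r' : R) = ((r⁻¹ : Rˣ) : R) := by
    rw [mul_assoc, Units.inv_mul, mul_one]
  rw [c1, c2] at e8
  rw [rmulL_smul_right, rmulR_smul_left]
  exact e8.symm
end

section
/- Grassmannian resolvent equation: let (s,t),(u,v) ∈ [m-d]×[d], π ∈ Gr^{(m-d;m)}_1(A), and suppose ρ̃^{(d;m)}(π;B) is (s,t)-admissible. Then for all σ ∈ ρ̃_n(π;B), σ' ∈ ρ̃_{n'}(π;B), and X ∈ M_{n,n'}(B): (Δ̃^{(d;m)}_{s,t} R̃^{(d;m)}(π;B|v,u))(σ;σ')(X) = − R̃^{(d;m)}(π;B|v,s)(σ) · X · R̃^{(d;m)}(π;B|t,u)(σ'). -/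
open Matrix

/-! Put `S = σ ⊕̃ σ'`, let `E = e_{d+s,t} ⊗ [[0, X], [0, 0]]` and let `T` be the projection
onto the last `d` block coordinates. Then `(σ;σ')_{s,t}(X) = S + E S T`, and as `E S T` vanishes
on the first `m - d` block columns, its `r`-matrix is `r(σ) ⊕̃ r(σ') + E S T`. With
`W = r(σ)⁻¹ ⊕̃ r(σ')⁻¹` the square `(E S T) W (E S T)` vanishes, since corner matrices multiply
block-diagonal ones into corner matrices and annihilate each other; hence `W - W (E S T) W` is
the inverse. A resolvent value is an entry of `B T r(B)⁻¹`; row `v` of `E` is zero, so only the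
correction `-K E K` with `K = S T W` contributes off the diagonal, and it is the corner
`-R(v,s)(σ) X R(t,u)(σ')`. -/

lemma add_mul_sub_mul_mul_eq_one {α : Type} [Ring α] {M W C : α} (hMW : M * W = 1)
    (hC : C * W * C = 0) : (M + C) * (W - W * C * W) = 1 := by
  calc (M + C) * (W - W * C * W) = M * W - M * W * C * W + C * W - C * W * C * W := by
        noncomm_ring
    _ = 1 := by rw [hMW, hC]; noncomm_ring

lemma Matrix.mul_single_mul_apply {ι α : Type} [Fintype ι] [DecidableEq ι]
    [NonUnitalSemiring α] (K K' : Matrix ι ι α) (i j a b : ι) (c : α) :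
    (K * single i j c * K') a b = K a i * c * K' j b := by
  rw [Matrix.mul_assoc, mul_apply, Finset.sum_eq_single i]
  · simp [_root_.mul_assoc]
  · intro k _ hk
    simp [single_mul_apply_of_ne _ _ _ _ _ hk]
  · simp

lemma Fin.sum_ite_sub_le {M : Type} [AddCommMonoid M] {m d : ℕ} (hd : d ≤ m) (f : Fin m → M) :
    ∑ k : Fin m, (if m - d ≤ (k : ℕ) then f k else 0) =
      ∑ j : Fin d, f ⟨m - d + j, by omega⟩ := by
  rw [← Fin.sum_congr' _ (Nat.sub_add_cancel hd), Fin.sum_univ_add]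
  have hhead (i : Fin (m - d)) :
      ¬ m - d ≤ (Fin.cast (Nat.sub_add_cancel hd) (Fin.castAdd d i) : ℕ) := by
    simp only [Fin.val_cast, Fin.val_castAdd, not_le, i.isLt]
  have htail (j : Fin d) :
      m - d ≤ (Fin.cast (Nat.sub_add_cancel hd) (Fin.natAdd (m - d) j) : ℕ) := by
    simp
  simp only [hhead, htail, if_false, if_true, Finset.sum_const_zero, zero_add]
  rfl

section BlockSums

variable {A : Type} [Ring A]

lemma ext_finSumFinEquiv {α : Type} {n n' : ℕ} {M N : Mat α (n + n')}
    (h : ∀ i j,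
      M (finSumFinEquiv i) (finSumFinEquiv j) = N (finSumFinEquiv i) (finSumFinEquiv j)) :
    M = N := by
  ext i j
  obtain ⟨i, rfl⟩ := finSumFinEquiv.surjective i
  obtain ⟨j, rfl⟩ := finSumFinEquiv.surjective j
  exact h i j

lemma dsumMat_mul_cornerMat {n n' : ℕ} (X : Mat A n) (Y : Mat A n')
    (Z : Matrix (Fin n) (Fin n') A) :
    dsumMat X Y * cornerMat Z = cornerMat (X * Z) := by
  simp [dsumMat, cornerMat, fromBlocks_multiply]

lemma cornerMat_mul_dsumMat {n n' : ℕ} (Z : Matrix (Fin n) (Fin n') A) (X : Mat A n)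
    (Y : Mat A n') :
    cornerMat Z * dsumMat X Y = cornerMat (Z * Y) := by
  simp [dsumMat, cornerMat, fromBlocks_multiply]

lemma cornerMat_mul_cornerMat {n n' : ℕ} (Z Z' : Matrix (Fin n) (Fin n') A) :
    cornerMat Z * cornerMat Z' = 0 := by
  simp [cornerMat, fromBlocks_multiply]

lemma cornerMat_neg {n n' : ℕ} (Z : Matrix (Fin n) (Fin n') A) :
    cornerMat (-Z) = -cornerMat Z :=
  ext_finSumFinEquiv fun i j => by cases i <;> cases j <;> simp [cornerMat]

lemma dsumMat_add {n n' : ℕ} (X X' : Mat A n) (Y Y' : Mat A n') :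
    dsumMat (X + X') (Y + Y') = dsumMat X Y + dsumMat X' Y' :=
  ext_finSumFinEquiv fun i j => by cases i <;> cases j <;> simp [dsumMat]

lemma dsumMat_diagonal_const {n n' : ℕ} (c : A) :
    dsumMat (diagonal fun _ : Fin n => c) (diagonal fun _ : Fin n' => c) = diagonal fun _ => c := by
  simp [dsumMat, fromBlocks_diagonal, submatrix_diagonal_equiv]

@[simp]
lemma dsumMat_zero {n n' : ℕ} : dsumMat (0 : Mat A n) (0 : Mat A n') = 0 := by
  simp [dsumMat]

@[simp]
lemma dsumMat_one {n n' : ℕ} : dsumMat (1 : Mat A n) (1 : Mat A n') = 1 := by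
  simpa using dsumMat_diagonal_const (n := n) (n' := n') (1 : A)

lemma triW_eq_dsumMat_add_cornerMat {n n' : ℕ} (P : Mat A n) (H : Matrix (Fin n) (Fin n') A)
    (Q : Mat A n') :
    triW P H Q = dsumMat P Q + cornerMat H :=
  ext_finSumFinEquiv fun i j => by cases i <;> cases j <;> simp [triW, dsumMat, cornerMat]

lemma sum_dsumMat {ι : Type} (S : Finset ι) {n n' : ℕ} (f : ι → Mat A n)
    (g : ι → Mat A n') :
    ∑ k ∈ S, dsumMat (f k) (g k) = dsumMat (∑ k ∈ S, f k) (∑ k ∈ S, g k) := by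
  classical
  induction S using Finset.induction with
  | empty => simp [dsumMat]
  | insert _ _ h ih => simp [Finset.sum_insert h, ih, dsumMat_add]

lemma dsum_mul {m n n' : ℕ} (P P' : BMat A m n) (Q Q' : BMat A m n') :
    dsum P Q * dsum P' Q' = dsum (P * P') (Q * Q') := by
  ext1 i j
  simp [mul_apply, dsum, dsumMat_mul, sum_dsumMat]

lemma dsum_one {m n n' : ℕ} : dsum (1 : BMat A m n) (1 : BMat A m n') = 1 := by
  ext1 i j
  by_cases h : i = j <;> simp [dsum, one_apply, h]

lemma single_cornerMat_mul_dsum_mul_single {m n n' : ℕ} (i j : Fin m)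
    (Y : Matrix (Fin n) (Fin n') A) (P : BMat A m n) (Q : BMat A m n') :
    single i j (cornerMat Y) * dsum P Q * single i j (cornerMat Y) = 0 := by
  rw [single_mul_mul_single]
  simp [dsum, cornerMat_mul_dsumMat, cornerMat_mul_cornerMat]

end BlockSums

section Resolvent

variable {A : Type} [Ring A]

def tailProj (m d n : ℕ) : BMat A m n :=
  diagonal fun j => if m - d ≤ (j : ℕ) then 1 else 0

lemma dsum_tailProj {m d n n' : ℕ} :
    dsum (tailProj m d n : BMat A m n) (tailProj m d n') = tailProj m d (n + n') := by
  ext1 i j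
  by_cases hij : i = j
  · subst hij
    simp only [dsum, tailProj, of_apply, diagonal_apply_eq]
    split_ifs <;> simp
  · simp [dsum, tailProj, hij]

lemma dsum_mul_tailProj_mul {m d n n' : ℕ} (P R₀ : BMat A m n) (Q R₁ : BMat A m n') :
    dsum P Q * tailProj m d (n + n') * dsum R₀ R₁ =
      dsum (P * tailProj m d n * R₀) (Q * tailProj m d n' * R₁) := by
  rw [← dsum_mul, ← dsum_mul, dsum_tailProj]

lemma mul_tailProj_apply {m d n : ℕ} (N : BMat A m n) (i j : Fin m) :
    (N * tailProj m d n : BMat A m n) i j = if m - d ≤ (j : ℕ) then N i j else 0 := by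
  simp [tailProj, mul_diagonal]

lemma resVal_eq_mul_tailProj_mul_apply {m d n : ℕ} (hd : d ≤ m) (v : Fin d) (u : Fin (m - d))
    (B W : BMat A m n) :
    resVal hd v u B W =
      (B * tailProj m d n * W : BMat A m n) ⟨v, by omega⟩ ⟨d + u, by omega⟩ := by
  simp only [mul_apply (M := B * tailProj m d n), mul_tailProj_apply, ite_mul, zero_mul]
  rw [Fin.sum_ite_sub_le hd]
  rfl

lemma rmat_dsum {m d n n' : ℕ} (hd : d ≤ m) (P Q : BMat A m n) (P' Q' : BMat A m n') :
    rmat hd (dsum P P') (dsum Q Q') = dsum (rmat hd P Q) (rmat hd P' Q') := by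
  ext1 i j
  by_cases hj : (j : ℕ) < m - d <;> simp [rmat, dsum, hj]

lemma rmat_add_mul_tailProj {m d n : ℕ} (hd : d ≤ m) (P Q N : BMat A m n) :
    rmat hd P (Q + N * tailProj m d n) = rmat hd P Q + N * tailProj m d n := by
  ext1 i j
  by_cases hj : (j : ℕ) < m - d
  · simp only [rmat, of_apply, Matrix.add_apply, dif_pos hj, mul_tailProj_apply,
      if_neg (Nat.not_le.mpr hj), add_zero]
  · simp only [rmat, of_apply, Matrix.add_apply, dif_neg hj, mul_tailProj_apply,
      if_pos (Nat.le_of_not_lt hj)]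

lemma ampl_add {m : ℕ} (p : BMat A m 1) (n n' : ℕ) :
    ampl p (n + n') = dsum (ampl p n) (ampl p n') := by
  ext1 i j
  exact (dsumMat_diagonal_const _).symm

lemma ins_eq_dsum_add_single_mul {m d n n' : ℕ} (hd : d ≤ m) (u : Fin (m - d)) (v : Fin d)
    (P : BMat A m n) (Q : BMat A m n') (X : Matrix (Fin n) (Fin n') A) :
    ins hd u v P Q X = dsum P Q +
      single ⟨d + u, by omega⟩ ⟨v, by omega⟩ (cornerMat X) * dsum P Q *
        tailProj m d (n + n') := by
  ext1 i j
  simp only [ins, Matrix.add_apply, of_apply, mul_tailProj_apply]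
  congr 1
  by_cases hi : i = ⟨d + u, by omega⟩
  · subst hi
    simp [dsum, cornerMat_mul_dsumMat]
  · have hi' : (i : ℕ) ≠ d + u := fun h => hi (Fin.ext h)
    simp [single_mul_apply_of_ne _ _ _ _ _ hi, hi']

lemma eq_sub_of_mul_rmat_ins_eq_one {m d n n' : ℕ} (hd : d ≤ m) (p : BMat A m 1)
    (s : Fin (m - d)) (t : Fin d) (P : BMat A m n) (Q : BMat A m n')
    (Y : Matrix (Fin n) (Fin n') A)
    {R₀ : BMat A m n} {R₁ : BMat A m n'} {R₂ : BMat A m (n + n')}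
    (h₀ : rmat hd (ampl p n) P * R₀ = 1) (h₁ : rmat hd (ampl p n') Q * R₁ = 1)
    (h₂ : R₂ * rmat hd (ampl p (n + n')) (ins hd s t P Q Y) = 1) :
    R₂ = dsum R₀ R₁ - dsum R₀ R₁ *
      (single ⟨d + s, by omega⟩ ⟨t, by omega⟩ (cornerMat Y) * dsum P Q *
        tailProj m d (n + n')) * dsum R₀ R₁ := by
  set E : BMat A m (n + n') := single ⟨d + s, by omega⟩ ⟨t, by omega⟩ (cornerMat Y)
  have hnil : E * dsum P Q * tailProj m d (n + n') * dsum R₀ R₁ *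
      (E * dsum P Q * tailProj m d (n + n')) = 0 := by
    have hassoc (S T W : BMat A m (n + n')) :
        E * S * T * W * (E * S * T) = E * (S * T * W) * E * S * T := by
      noncomm_ring
    rw [hassoc, dsum_mul_tailProj_mul, single_cornerMat_mul_dsum_mul_single, zero_mul, zero_mul]
  rw [ins_eq_dsum_add_single_mul, ampl_add, rmat_add_mul_tailProj, rmat_dsum] at h₂
  exact left_inv_eq_right_inv h₂
    (add_mul_sub_mul_mul_eq_one (by rw [dsum_mul, h₀, h₁, dsum_one]) hnil)

end Resolvent

section Coercion

variable {R : Type} [CommRing R] {A : Type} [Ring A] [Algebra R A]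

lemma dsumMat_map {A' : Type} [Ring A'] {F : Type} [FunLike F A A'] [RingHomClass F A A'] (f : F)
    {n n' : ℕ} (X : Mat A n) (Y : Mat A n') :
    (dsumMat X Y).map f = dsumMat (X.map f) (Y.map f) :=
  ext_finSumFinEquiv fun i j => by cases i <;> cases j <;> simp [dsumMat]

lemma cornerMat_map {A' : Type} [Ring A'] {F : Type} [FunLike F A A'] [RingHomClass F A A'] (f : F)
    {n n' : ℕ} (X : Matrix (Fin n) (Fin n') A) :
    (cornerMat X).map f = cornerMat (X.map f) :=
  ext_finSumFinEquiv fun i j => by cases i <;> cases j <;> simp [cornerMat]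

lemma rcmap_smul (D : Subalgebra R A) {n n' : ℕ} (c : R) (X : Matrix (Fin n) (Fin n') D) :
    rcmap D (c • X) = c • rcmap D X := by
  ext i j
  simp [rcmap]

lemma bmap_ins (D : Subalgebra R A) {m d n n' : ℕ} (hd : d ≤ m) (u : Fin (m - d)) (v : Fin d)
    (P : BMat D m n) (Q : BMat D m n') (X : Matrix (Fin n) (Fin n') D) :
    bmap D (ins hd u v P Q X) = ins hd u v (bmap D P) (bmap D Q) (rcmap D X) := by
  ext1 i j
  have hval : (fun x : D => (x : A)) = D.val := rfl
  simp only [bmap, rcmap, ins, dsum, of_apply, Matrix.add_apply, hval]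
  rw [Matrix.map_add _ (map_add D.val), dsumMat_map]
  split_ifs
  · rw [cornerMat_map]
    exact congrArg (_ + cornerMat ·) (Matrix.map_mul (f := D.val.toRingHom))
  · simp

end Coercion

theorem resolvent_equation_general {R : Type} [CommRing R] {A : Type} [Ring A] [Algebra R A]
    (D : Subalgebra R A) (m d : ℕ) (hd : d ≤ m)
    (p : BMat A m 1)
    (s : Fin (m - d)) (t : Fin d) (u : Fin (m - d)) (v : Fin d) :
    ∀ (n n' : ℕ) (b : BMat (↥D) m n) (b' : BMat (↥D) m n')
      (X : Matrix (Fin n) (Fin n') ↥D),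
      ResMem hd p D b → ResMem hd p D b' →
      ∀ r : Rˣ, ∀ (Rinv0 : BMat A m n) (Rinv1 : BMat A m n') (Rinv2 : BMat A m (n + n')),
        rmat hd (ampl p n) (bmap D b) * Rinv0 = 1 →
        Rinv0 * rmat hd (ampl p n) (bmap D b) = 1 →
        rmat hd (ampl p n') (bmap D b') * Rinv1 = 1 →
        Rinv1 * rmat hd (ampl p n') (bmap D b') = 1 →
        rmat hd (ampl p (n + n')) (bmap D (ins hd s t b b' ((r : R) • X))) * Rinv2 = 1 →
        Rinv2 * rmat hd (ampl p (n + n')) (bmap D (ins hd s t b b' ((r : R) • X))) = 1 →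
        resVal hd v u (bmap D (ins hd s t b b' ((r : R) • X))) Rinv2 =
          triW (resVal hd v u (bmap D b) Rinv0)
            ((r : R) • (-(resVal hd v s (bmap D b) Rinv0) * rcmap D X *
              resVal hd t u (bmap D b') Rinv1))
            (resVal hd v u (bmap D b') Rinv1) := by
  intro n n' b b' X _ _ r R₀ R₁ R₂ h₀ _ h₁ _ _ h₂
  rw [bmap_ins] at h₂ ⊢
  have hR₂ := eq_sub_of_mul_rmat_ins_eq_one hd p s t _ _ _ h₀ h₁ h₂
  rw [ins_eq_dsum_add_single_mul]
  set S := dsum (bmap D b) (bmap D b')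
  set T := tailProj m d (n + n') (A := A)
  set W := dsum R₀ R₁
  set E : BMat A m (n + n') :=
    single ⟨d + s, by omega⟩ ⟨t, by omega⟩ (cornerMat (rcmap D ((r : R) • X)))
  have hexpand : (S + E * S * T) * T * (W - W * (E * S * T) * W) =
      S * T * W - S * T * W * E * (S * T * W) + E * (S * T * T * (W - W * (E * S * T) * W)) := by
    noncomm_ring
  have hvs : (⟨v, by omega⟩ : Fin m) ≠ ⟨d + s, by omega⟩ := by
    simp only [ne_eq, Fin.mk.injEq]
    omega
  rw [hR₂, resVal_eq_mul_tailProj_mul_apply, hexpand, Matrix.add_apply, Matrix.sub_apply,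
    single_mul_apply_of_ne _ _ _ _ _ hvs, add_zero, mul_single_mul_apply, dsum_mul_tailProj_mul]
  simp only [dsum, of_apply, resVal_eq_mul_tailProj_mul_apply hd, dsumMat_mul_cornerMat,
    cornerMat_mul_dsumMat, triW_eq_dsumMat_add_cornerMat, sub_eq_add_neg, ← cornerMat_neg,
    rcmap_smul, Matrix.mul_smul, Matrix.smul_mul, Matrix.neg_mul, smul_neg]

/-- the Grassmannian resolvent equation
`(Δ̃^{(d;m)}_{s,t} R̃(π;B|v,u))(σ;σ')(X) = − R̃(π;B|v,s)(σ) ⋅ X ⋅ R̃(π;B|t,u)(σ')`,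
expressed through the defining property of `Δ̃`. -/
theorem resolvent_equation {R : Type} [CommRing R] {A : Type} [Ring A] [Algebra R A]
    (D : Subalgebra R A) (m d : ℕ) (hd1 : 1 ≤ d) (hd : d ≤ m)
    (p : BMat A m 1) (hp : IsUnit p)
    (s : Fin (m - d)) (t : Fin d) (u : Fin (m - d)) (v : Fin d)
    (hadm : ∀ (n n' : ℕ) (b : BMat (↥D) m n) (b' : BMat (↥D) m n')
      (X : Matrix (Fin n) (Fin n') ↥D), ResMem hd p D b → ResMem hd p D b' →
      ∃ r : Rˣ, ResMem hd p D (ins hd s t b b' ((r : R) • X))) :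
    ∀ (n n' : ℕ) (b : BMat (↥D) m n) (b' : BMat (↥D) m n')
      (X : Matrix (Fin n) (Fin n') ↥D),
      ResMem hd p D b → ResMem hd p D b' →
      ∀ r : Rˣ, ∀ (Rinv0 : BMat A m n) (Rinv1 : BMat A m n') (Rinv2 : BMat A m (n + n')),
        rmat hd (ampl p n) (bmap D b) * Rinv0 = 1 →
        Rinv0 * rmat hd (ampl p n) (bmap D b) = 1 →
        rmat hd (ampl p n') (bmap D b') * Rinv1 = 1 →
        Rinv1 * rmat hd (ampl p n') (bmap D b') = 1 →
        rmat hd (ampl p (n + n')) (bmap D (ins hd s t b b' ((r : R) • X))) * Rinv2 = 1 →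
        Rinv2 * rmat hd (ampl p (n + n')) (bmap D (ins hd s t b b' ((r : R) • X))) = 1 →
        resVal hd v u (bmap D (ins hd s t b b' ((r : R) • X))) Rinv2 =
          triW (resVal hd v u (bmap D b) Rinv0)
            ((r : R) • (-(resVal hd v s (bmap D b) Rinv0) * rcmap D X *
              resVal hd t u (bmap D b') Rinv1))
            (resVal hd v u (bmap D b') Rinv1) :=
  resolvent_equation_general D m d hd p s t u v
end
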